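/- arXiv:2312.13526 — 4 statements merged into one kernel-verified Lean document; each statement's English description precedes it below -/
import Mathlib

section
/- The pointer-advancement definition of dominance and the algebraic definition of dominance are equivalent: for nonempty finite sequences A and B of real numbers, there exists a valid pointer-advancement sequence witnessing A ≼ B if and only if for every i ∈ [|A|] there exists j ∈ [|B|] satisfying the four max/min inequalities. -/
/-!
Rows are indexed by `A`, columns by `B`, and the cell `(i, j)` is free when `A i ≤ B j`; pointer
dominance asks for a monotone lattice path of free cells from `(0, 0)` to the opposite corner.
Where such a path meets row `i`, at column `j`, it splits into paths through the boxes before and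
after `(i, j)`, and along a path every value of `A` is matched by a larger value of `B` and every
value of `B` by a smaller value of `A`; this gives the four inequalities.

Conversely, the algebraic condition makes the row of a minimum of `A` and the column of a maximum
of `B` entirely free, and it restricts to the two boxes into which such a free cross cuts the grid,
since the cross supplies the comparisons lost by restricting. Unless the grid is a single row or
column, the cross can be chosen away from the two corners, using the further free columns through
which a maximum of `A` is matched; induction on the size of the box then glues two paths at the
cross.
-/

/-- Pointer-advancement definition of dominance (0-indexed). -/
def PtrDom (A B : List ℝ) : Prop :=
  ∃ a b : ℕ → ℕ,
    a 0 = 0 ∧ b 0 = 0 ∧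
    a (A.length + B.length - 2) = A.length - 1 ∧
    b (A.length + B.length - 2) = B.length - 1 ∧
    (∀ k, k + 1 ≤ A.length + B.length - 2 →
      ((a (k + 1) = a k + 1 ∧ b (k + 1) = b k) ∨
       (a (k + 1) = a k ∧ b (k + 1) = b k + 1))) ∧
    (∀ k ≤ A.length + B.length - 2,
      a k < A.length ∧ b k < B.length ∧ A.getD (a k) 0 ≤ B.getD (b k) 0)

/-- Algebraic definition of dominance. -/
def AlgDom (A B : List ℝ) : Prop :=
  ∀ i, (hi : i < A.length) → ∃ j, ∃ (hj : j < B.length),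
    (Finset.Ico i A.length).sup' ⟨i, Finset.mem_Ico.mpr ⟨le_rfl, hi⟩⟩ (fun k => A.getD k 0)
      ≤ (Finset.Ico j B.length).sup' ⟨j, Finset.mem_Ico.mpr ⟨le_rfl, hj⟩⟩ (fun k => B.getD k 0) ∧
    (Finset.Ico i A.length).inf' ⟨i, Finset.mem_Ico.mpr ⟨le_rfl, hi⟩⟩ (fun k => A.getD k 0)
      ≤ (Finset.Ico j B.length).inf' ⟨j, Finset.mem_Ico.mpr ⟨le_rfl, hj⟩⟩ (fun k => B.getD k 0) ∧
    (Finset.Iic i).sup' Finset.nonempty_Iic (fun k => A.getD k 0)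
      ≤ (Finset.Iic j).sup' Finset.nonempty_Iic (fun k => B.getD k 0) ∧
    (Finset.Iic i).inf' Finset.nonempty_Iic (fun k => A.getD k 0)
      ≤ (Finset.Iic j).inf' Finset.nonempty_Iic (fun k => B.getD k 0)

namespace Dominance

open Finset Relation

/-- For nonempty `s` and `t` this says `s.sup' f ≤ t.sup' g` and `s.inf' f ≤ t.inf' g`. -/
def RangeLE (f g : ℕ → ℝ) (s t : Finset ℕ) : Prop :=
  (∀ x ∈ s, ∃ y ∈ t, f x ≤ g y) ∧ ∀ y ∈ t, ∃ x ∈ s, f x ≤ g y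

section RangeLE

variable {f g : ℕ → ℝ} {s t t' : Finset ℕ} {x₀ y₀ : ℕ}

theorem rangeLE_iff (hs : s.Nonempty) (ht : t.Nonempty) :
    RangeLE f g s t ↔ s.sup' hs f ≤ t.sup' ht g ∧ s.inf' hs f ≤ t.inf' ht g := by
  simp only [RangeLE, sup'_le_iff, le_inf'_iff]
  simp only [le_sup'_iff, inf'_le_iff]

theorem rangeLE_of_forall_le (hx₀ : x₀ ∈ s) (hy₀ : y₀ ∈ t) (hrow : ∀ y ∈ t, f x₀ ≤ g y)
    (hcol : ∀ x ∈ s, f x ≤ g y₀) : RangeLE f g s t :=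
  ⟨fun x hx => ⟨y₀, hy₀, hcol x hx⟩, fun y hy => ⟨x₀, hx₀, hrow y hy⟩⟩

theorem RangeLE.of_subset_right (h : RangeLE f g s t) (ht' : t' ⊆ t) (hy₀ : y₀ ∈ t')
    (hcol : ∀ x ∈ s, f x ≤ g y₀) : RangeLE f g s t' :=
  ⟨fun x hx => ⟨y₀, hy₀, hcol x hx⟩, fun y hy => h.2 y (ht' hy)⟩

theorem RangeLE.insert_left (h : RangeLE f g s t) (hy₀ : y₀ ∈ t) (hle : f x₀ ≤ g y₀) :
    RangeLE f g (insert x₀ s) t := by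
  refine ⟨fun x hx => ?_, fun y hy => ?_⟩
  · rcases mem_insert.1 hx with rfl | hx
    exacts [⟨y₀, hy₀, hle⟩, h.1 x hx]
  · obtain ⟨x, hx, hxy⟩ := h.2 y hy
    exact ⟨x, mem_insert_of_mem hx, hxy⟩

theorem RangeLE.insert_right (h : RangeLE f g s t) (hx₀ : x₀ ∈ s) (hle : f x₀ ≤ g y₀) :
    RangeLE f g s (insert y₀ t) := by
  refine ⟨fun x hx => ?_, fun y hy => ?_⟩
  · obtain ⟨y, hy, hxy⟩ := h.1 x hx
    exact ⟨y, mem_insert_of_mem hy, hxy⟩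
  · rcases mem_insert.1 hy with rfl | hy
    exacts [⟨x₀, hx₀, hle⟩, h.2 y hy]

theorem RangeLE.exists_free_row (h : RangeLE f g s t) (hs : s.Nonempty) :
    ∃ r ∈ s, ∀ y ∈ t, f r ≤ g y := by
  obtain ⟨r, hr, hmin⟩ := s.exists_min_image f hs
  refine ⟨r, hr, fun y hy => ?_⟩
  obtain ⟨x, hx, hxy⟩ := h.2 y hy
  exact (hmin x hx).trans hxy

theorem RangeLE.exists_free_col (h : RangeLE f g s t) (ht : t.Nonempty) :
    ∃ c ∈ t, ∀ x ∈ s, f x ≤ g c := by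
  obtain ⟨c, hc, hmax⟩ := t.exists_max_image g ht
  refine ⟨c, hc, fun x hx => ?_⟩
  obtain ⟨y, hy, hxy⟩ := h.1 x hx
  exact hxy.trans (hmax y hy)

end RangeLE

/-- `AlgDom` for the blocks `f` on `[a, a']` and `g` on `[b, b']`, prefixes listed first. -/
def AlgBox (f g : ℕ → ℝ) (a a' b b' : ℕ) : Prop :=
  ∀ i ∈ Icc a a', ∃ j ∈ Icc b b',
    RangeLE f g (Icc a i) (Icc b j) ∧ RangeLE f g (Icc i a') (Icc j b')

def IsCross (f g : ℕ → ℝ) (a a' b b' p q : ℕ) : Prop :=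
  p ∈ Icc a a' ∧ q ∈ Icc b b' ∧ (∀ y ∈ Icc b b', f p ≤ g y) ∧ ∀ x ∈ Icc a a', f x ≤ g q

namespace AlgBox

variable {f g : ℕ → ℝ} {a a' b b' p q : ℕ}

theorem rangeLE (h : AlgBox f g a a' b b') (ha : a ≤ a') :
    RangeLE f g (Icc a a') (Icc b b') := by
  obtain ⟨j, hj, hpre, hsuf⟩ := h a (left_mem_Icc.2 ha)
  rw [mem_Icc] at hj
  refine ⟨fun x hx => ?_, fun y hy => ?_⟩
  · obtain ⟨y, hy, hxy⟩ := hsuf.1 x hx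
    exact ⟨y, Icc_subset_Icc_left hj.1 hy, hxy⟩
  · rw [mem_Icc] at hy
    rcases le_total y j with hyj | hjy
    · obtain ⟨x, hx, hxy⟩ := hpre.2 y (mem_Icc.2 ⟨hy.1, hyj⟩)
      exact ⟨x, Icc_subset_Icc_right ha hx, hxy⟩
    · exact hsuf.2 y (mem_Icc.2 ⟨hjy, hy.2⟩)

theorem exists_inner_cross_of_free_row_left (h : AlgBox f g a a' b b') (ha : a < a')
    (hb : b < b') (hrow : ∀ y ∈ Icc b b', f a ≤ g y) :
    ∃ p q, IsCross f g a a' b b' p q ∧ a + b < p + q ∧ p + q < a' + b' := by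
  obtain ⟨p₁, hp₁, hmax⟩ := (Icc a a').exists_max_image f (nonempty_Icc.2 ha.le)
  obtain ⟨j, hj, -, hsuf⟩ := h p₁ hp₁
  obtain ⟨c, hc, hp₁c⟩ := hsuf.1 p₁ (left_mem_Icc.2 (mem_Icc.1 hp₁).2)
  have hcol : ∀ x ∈ Icc a a', f x ≤ g c := fun x hx => (hmax x hx).trans hp₁c
  simp only [mem_Icc] at hp₁ hj hc
  by_cases hcb : c = b
  · subst hcb
    obtain ⟨r, hr, hrow_r⟩ := hsuf.exists_free_row (nonempty_Icc.2 hp₁.2)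
    rw [show j = c by omega] at hrow_r
    rw [mem_Icc] at hr
    by_cases hra : r = a
    · -- then `p₁ = a`: row `a` carries the maximum of `f`, so every row is free
      obtain rfl : p₁ = a := by omega
      refine ⟨a', c, ⟨right_mem_Icc.2 ha.le, mem_Icc.2 ⟨le_rfl, hb.le⟩, fun y hy => ?_, hcol⟩,
        by omega, by omega⟩
      exact (hmax a' (right_mem_Icc.2 ha.le)).trans (hrow y hy)
    · exact ⟨r, c, ⟨mem_Icc.2 ⟨by omega, hr.2⟩, mem_Icc.2 ⟨le_rfl, hb.le⟩, hrow_r, hcol⟩,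
        by omega, by omega⟩
  · exact ⟨a, c, ⟨left_mem_Icc.2 ha.le, mem_Icc.2 ⟨by omega, hc.2⟩, hrow, hcol⟩,
      by omega, by omega⟩

theorem exists_inner_cross_of_free_row_right (h : AlgBox f g a a' b b') (ha : a < a')
    (hb : b < b') (hrow : ∀ y ∈ Icc b b', f a' ≤ g y) :
    ∃ p q, IsCross f g a a' b b' p q ∧ a + b < p + q ∧ p + q < a' + b' := by
  obtain ⟨p₁, hp₁, hmax⟩ := (Icc a a').exists_max_image f (nonempty_Icc.2 ha.le)
  obtain ⟨j, hj, hpre, -⟩ := h p₁ hp₁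
  obtain ⟨c, hc, hp₁c⟩ := hpre.1 p₁ (right_mem_Icc.2 (mem_Icc.1 hp₁).1)
  have hcol : ∀ x ∈ Icc a a', f x ≤ g c := fun x hx => (hmax x hx).trans hp₁c
  simp only [mem_Icc] at hp₁ hj hc
  by_cases hcb : c = b'
  · subst hcb
    obtain ⟨r, hr, hrow_r⟩ := hpre.exists_free_row (nonempty_Icc.2 hp₁.1)
    rw [show j = c by omega] at hrow_r
    rw [mem_Icc] at hr
    by_cases hra : r = a'
    · -- then `p₁ = a'`: row `a'` carries the maximum of `f`, so every row is free
      obtain rfl : p₁ = a' := by omega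
      refine ⟨a, c, ⟨left_mem_Icc.2 ha.le, mem_Icc.2 ⟨hb.le, le_rfl⟩, fun y hy => ?_, hcol⟩,
        by omega, by omega⟩
      exact (hmax a (left_mem_Icc.2 ha.le)).trans (hrow y hy)
    · exact ⟨r, c, ⟨mem_Icc.2 ⟨hr.1, by omega⟩, mem_Icc.2 ⟨hb.le, le_rfl⟩, hrow_r, hcol⟩,
        by omega, by omega⟩
  · exact ⟨a', c, ⟨right_mem_Icc.2 ha.le, mem_Icc.2 ⟨hc.1, by omega⟩, hrow, hcol⟩,
      by omega, by omega⟩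

theorem exists_inner_cross (h : AlgBox f g a a' b b') (ha : a < a') (hb : b < b') :
    ∃ p q, IsCross f g a a' b b' p q ∧ a + b < p + q ∧ p + q < a' + b' := by
  obtain ⟨p, hp, hrow⟩ := (h.rangeLE ha.le).exists_free_row (nonempty_Icc.2 ha.le)
  obtain ⟨q, hq, hcol⟩ := (h.rangeLE ha.le).exists_free_col (nonempty_Icc.2 hb.le)
  rw [mem_Icc] at hp
  rcases hp.1.eq_or_lt with rfl | hap
  · exact h.exists_inner_cross_of_free_row_left ha hb hrow
  rcases hp.2.eq_or_lt with rfl | hpa'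
  · exact h.exists_inner_cross_of_free_row_right ha hb hrow
  rw [mem_Icc] at hq
  exact ⟨p, q, ⟨mem_Icc.2 hp, mem_Icc.2 hq, hrow, hcol⟩, by omega, by omega⟩

theorem restrict_left (h : AlgBox f g a a' b b') (hc : IsCross f g a a' b b' p q) :
    AlgBox f g a p b q := by
  obtain ⟨hp, hq, hrow, hcol⟩ := hc
  rw [mem_Icc] at hp hq
  intro i hi
  rw [mem_Icc] at hi
  obtain ⟨j, hj, hpre, -⟩ := h i (mem_Icc.2 ⟨hi.1, hi.2.trans hp.2⟩)
  rw [mem_Icc] at hj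
  refine ⟨min j q, mem_Icc.2 ⟨le_min hj.1 hq.1, min_le_right _ _⟩, ?_, ?_⟩
  · rcases le_total j q with hjq | hqj
    · rwa [min_eq_left hjq]
    · rw [min_eq_right hqj]
      exact hpre.of_subset_right (Icc_subset_Icc_right hqj) (right_mem_Icc.2 hq.1)
        fun x hx => hcol x (Icc_subset_Icc_right (hi.2.trans hp.2) hx)
  · exact rangeLE_of_forall_le (right_mem_Icc.2 hi.2) (right_mem_Icc.2 (min_le_right _ _))
      (fun y hy => hrow y (Icc_subset_Icc (le_min hj.1 hq.1) hq.2 hy))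
      (fun x hx => hcol x (Icc_subset_Icc hi.1 hp.2 hx))

theorem restrict_right (h : AlgBox f g a a' b b') (hc : IsCross f g a a' b b' p q) :
    AlgBox f g p a' q b' := by
  obtain ⟨hp, hq, hrow, hcol⟩ := hc
  rw [mem_Icc] at hp hq
  intro i hi
  rw [mem_Icc] at hi
  obtain ⟨j, hj, -, hsuf⟩ := h i (mem_Icc.2 ⟨hp.1.trans hi.1, hi.2⟩)
  rw [mem_Icc] at hj
  refine ⟨max j q, mem_Icc.2 ⟨le_max_right _ _, max_le hj.2 hq.2⟩, ?_, ?_⟩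
  · exact rangeLE_of_forall_le (left_mem_Icc.2 hi.1) (left_mem_Icc.2 (le_max_right _ _))
      (fun y hy => hrow y (Icc_subset_Icc hq.1 (max_le hj.2 hq.2) hy))
      (fun x hx => hcol x (Icc_subset_Icc hp.1 hi.2 hx))
  · rcases le_total q j with hqj | hjq
    · rwa [max_eq_left hqj]
    · rw [max_eq_right hjq]
      exact hsuf.of_subset_right (Icc_subset_Icc_left hjq) (left_mem_Icc.2 hq.2)
        fun x hx => hcol x (Icc_subset_Icc_left (hp.1.trans hi.1) hx)

end AlgBox

def Step (f g : ℕ → ℝ) (u v : ℕ × ℕ) : Prop :=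
  (v = (u.1 + 1, u.2) ∨ v = (u.1, u.2 + 1)) ∧ f v.1 ≤ g v.2

def Reach (f g : ℕ → ℝ) (u v : ℕ × ℕ) : Prop :=
  f u.1 ≤ g u.2 ∧ ReflTransGen (Step f g) u v

namespace Reach

variable {f g : ℕ → ℝ} {u v w : ℕ × ℕ}

theorem refl (h : f u.1 ≤ g u.2) : Reach f g u u := ⟨h, .refl⟩

theorem tail (h : Reach f g u v) (hs : Step f g v w) : Reach f g u w := ⟨h.1, h.2.tail hs⟩

theorem trans (h₁ : Reach f g u v) (h₂ : Reach f g v w) : Reach f g u w :=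
  ⟨h₁.1, h₁.2.trans h₂.2⟩

theorem le (h : Reach f g u v) : u.1 ≤ v.1 ∧ u.2 ≤ v.2 := by
  obtain ⟨-, h⟩ := h
  induction h with
  | refl => exact ⟨le_rfl, le_rfl⟩
  | tail _ hs ih => rcases hs.1 with rfl | rfl <;> exact ⟨by dsimp; omega, by dsimp; omega⟩

theorem exists_mid (h : Reach f g u v) {i : ℕ} (hi : i ∈ Icc u.1 v.1) :
    ∃ j, Reach f g u (i, j) ∧ Reach f g (i, j) v := by
  obtain ⟨h₀, h⟩ := h
  rw [mem_Icc] at hi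
  induction h generalizing i with
  | refl =>
    obtain rfl : i = u.1 := by omega
    exact ⟨u.2, refl h₀, refl h₀⟩
  | @tail v w hr hs ih =>
    by_cases hiv : i ≤ v.1
    · obtain ⟨j, h₁, h₂⟩ := ih ⟨hi.1, hiv⟩
      exact ⟨j, h₁, h₂.tail hs⟩
    · obtain rfl : i = w.1 := by rcases hs.1 with rfl | rfl <;> dsimp at hi ⊢ <;> omega
      exact ⟨w.2, ⟨h₀, hr.tail hs⟩, refl hs.2⟩

theorem rangeLE (h : Reach f g u v) : RangeLE f g (Icc u.1 v.1) (Icc u.2 v.2) := by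
  obtain ⟨h₀, h⟩ := h
  induction h with
  | refl =>
    refine rangeLE_of_forall_le (left_mem_Icc.2 le_rfl) (left_mem_Icc.2 le_rfl) ?_ ?_ <;>
      simpa using h₀
  | @tail v w hr hs ih =>
    have huv := Reach.le ⟨h₀, hr⟩
    obtain ⟨rfl | rfl, hw⟩ := hs
    · rw [show Icc u.1 (v.1 + 1) = insert (v.1 + 1) (Icc u.1 v.1) by ext; simp; omega]
      exact ih.insert_left (right_mem_Icc.2 huv.2) hw
    · rw [show Icc u.2 (v.2 + 1) = insert (v.2 + 1) (Icc u.2 v.2) by ext; simp; omega]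
      exact ih.insert_right (right_mem_Icc.2 huv.1) hw

theorem algBox {a a' b b' : ℕ} (h : Reach f g (a, b) (a', b')) : AlgBox f g a a' b b' := by
  intro i hi
  obtain ⟨j, h₁, h₂⟩ := h.exists_mid hi
  exact ⟨j, mem_Icc.2 ⟨h₁.le.2, h₂.le.2⟩, h₁.rangeLE, h₂.rangeLE⟩

theorem of_free_row {a b b' : ℕ} (hrow : ∀ y ∈ Icc b b', f a ≤ g y) (hb : b ≤ b') :
    Reach f g (a, b) (a, b') := by
  induction b', hb using Nat.le_induction with
  | base => exact refl (hrow b (left_mem_Icc.2 le_rfl))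
  | succ k hk ih =>
    exact (ih fun y hy => hrow y (Icc_subset_Icc_right k.le_succ hy)).tail
      ⟨Or.inr rfl, hrow (k + 1) (mem_Icc.2 ⟨by omega, le_rfl⟩)⟩

theorem of_free_col {a a' b : ℕ} (hcol : ∀ x ∈ Icc a a', f x ≤ g b) (ha : a ≤ a') :
    Reach f g (a, b) (a', b) := by
  induction a', ha using Nat.le_induction with
  | base => exact refl (hcol a (left_mem_Icc.2 le_rfl))
  | succ k hk ih =>
    exact (ih fun x hx => hcol x (Icc_subset_Icc_right k.le_succ hx)).tail
      ⟨Or.inl rfl, hcol (k + 1) (mem_Icc.2 ⟨by omega, le_rfl⟩)⟩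

end Reach

theorem AlgBox.reach {f g : ℕ → ℝ} {a a' b b' : ℕ} (h : AlgBox f g a a' b b') (ha : a ≤ a')
    (hb : b ≤ b') : Reach f g (a, b) (a', b') := by
  obtain ⟨n, hn⟩ : ∃ n, a' - a + (b' - b) = n := ⟨_, rfl⟩
  induction n using Nat.strong_induction_on generalizing a a' b b' with
  | _ n ih =>
  rcases ha.eq_or_lt with rfl | ha
  · obtain ⟨p, hp, hrow⟩ := (h.rangeLE le_rfl).exists_free_row (nonempty_Icc.2 le_rfl)
    rw [Icc_self, mem_singleton] at hp
    exact Reach.of_free_row (hp ▸ hrow) hb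
  rcases hb.eq_or_lt with rfl | hb
  · obtain ⟨q, hq, hcol⟩ := (h.rangeLE ha.le).exists_free_col (nonempty_Icc.2 le_rfl)
    rw [Icc_self, mem_singleton] at hq
    exact Reach.of_free_col (hq ▸ hcol) ha.le
  obtain ⟨p, q, hc, hlo, hhi⟩ := h.exists_inner_cross ha hb
  have hp := mem_Icc.1 hc.1
  have hq := mem_Icc.1 hc.2.1
  exact (ih _ (by omega) (h.restrict_left hc) hp.1 hq.1 rfl).trans
    (ih _ (by omega) (h.restrict_right hc) hp.2 hq.2 rfl)

section Paths

variable {f g : ℕ → ℝ}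

theorem reach_of_path {a b : ℕ → ℕ} {N : ℕ} (ha₀ : a 0 = 0) (hb₀ : b 0 = 0)
    (hstep : ∀ k, k + 1 ≤ N →
      (a (k + 1) = a k + 1 ∧ b (k + 1) = b k) ∨ (a (k + 1) = a k ∧ b (k + 1) = b k + 1))
    (hfree : ∀ k ≤ N, f (a k) ≤ g (b k)) : ∀ k ≤ N, Reach f g (0, 0) (a k, b k) := by
  intro k hk
  induction k with
  | zero =>
    have h₀ := hfree 0 hk
    rw [ha₀, hb₀] at h₀ ⊢
    exact Reach.refl h₀
  | succ k ih =>
    refine (ih (by omega)).tail ⟨?_, hfree (k + 1) hk⟩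
    rcases hstep k hk with ⟨h₁, h₂⟩ | ⟨h₁, h₂⟩ <;> simp [h₁, h₂]

theorem Reach.exists_path {v : ℕ × ℕ} (h : Reach f g (0, 0) v) :
    ∃ a b : ℕ → ℕ, a 0 = 0 ∧ b 0 = 0 ∧ a (v.1 + v.2) = v.1 ∧ b (v.1 + v.2) = v.2 ∧
      (∀ k, k + 1 ≤ v.1 + v.2 →
        (a (k + 1) = a k + 1 ∧ b (k + 1) = b k) ∨ (a (k + 1) = a k ∧ b (k + 1) = b k + 1)) ∧
      ∀ k ≤ v.1 + v.2, a k ≤ v.1 ∧ b k ≤ v.2 ∧ f (a k) ≤ g (b k) := by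
  obtain ⟨h₀, h⟩ := h
  induction h with
  | refl =>
    exact ⟨fun _ => 0, fun _ => 0, rfl, rfl, rfl, rfl, fun k hk => by omega,
      fun _ _ => ⟨le_rfl, le_rfl, h₀⟩⟩
  | @tail v w _ hs ih =>
    obtain ⟨a, b, ha₀, hb₀, haN, hbN, hstep, hval⟩ := ih
    refine ⟨fun k => if k ≤ v.1 + v.2 then a k else w.1,
      fun k => if k ≤ v.1 + v.2 then b k else w.2, by simp [ha₀], by simp [hb₀], ?_⟩
    have hvw : v.1 ≤ w.1 ∧ v.2 ≤ w.2 ∧ w.1 + w.2 = v.1 + v.2 + 1 := by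
      rcases hs.1 with rfl | rfl <;> dsimp <;> omega
    refine ⟨by simp [hvw.2.2], by simp [hvw.2.2], fun k hk => ?_, fun k hk => ?_⟩
    · rcases Nat.lt_or_ge k (v.1 + v.2) with hk' | hk'
      · simpa [hk'.le, Nat.succ_le_of_lt hk'] using hstep k hk'
      · obtain rfl : k = v.1 + v.2 := by omega
        rcases hs.1 with rfl | rfl <;> simp [haN, hbN]
    · dsimp only
      split_ifs with hk'
      · obtain ⟨h₁, h₂, h₃⟩ := hval k hk'
        exact ⟨by omega, by omega, h₃⟩
      · exact ⟨le_rfl, le_rfl, hs.2⟩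

theorem ptrDom_iff_reach {A B : List ℝ} (hA : A ≠ []) (hB : B ≠ []) :
    PtrDom A B ↔ Reach (A.getD · 0) (B.getD · 0) (0, 0) (A.length - 1, B.length - 1) := by
  have hn := List.length_pos_iff.2 hA
  have hm := List.length_pos_iff.2 hB
  have hN : A.length + B.length - 2 = (A.length - 1) + (B.length - 1) := by omega
  constructor
  · rintro ⟨a, b, ha₀, hb₀, haN, hbN, hstep, hval⟩
    have h := reach_of_path (f := (A.getD · 0)) (g := (B.getD · 0)) ha₀ hb₀ hstep (fun k hk => (hval k hk).2.2) _ le_rfl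
    rwa [haN, hbN] at h
  · intro h
    obtain ⟨a, b, ha₀, hb₀, haN, hbN, hstep, hval⟩ := h.exists_path
    refine ⟨a, b, ha₀, hb₀, hN ▸ haN, hN ▸ hbN, hN ▸ hstep, fun k hk => ?_⟩
    obtain ⟨h₁, h₂, h₃⟩ := hval k (hN ▸ hk)
    exact ⟨by omega, by omega, h₃⟩

theorem algDom_iff_algBox {A B : List ℝ} (hA : A ≠ []) (hB : B ≠ []) :
    AlgDom A B ↔ AlgBox (A.getD · 0) (B.getD · 0) 0 (A.length - 1) 0 (B.length - 1) := by
  have hn := List.length_pos_iff.2 hA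
  have hm := List.length_pos_iff.2 hB
  have hIco : ∀ {i k : ℕ}, 0 < k → Ico i k = Icc i (k - 1) := fun hk => by ext; simp; omega
  have hIic : ∀ i : ℕ, Iic i = Icc 0 i := fun i => by ext; simp
  constructor
  · intro h i hi
    rw [mem_Icc] at hi
    obtain ⟨j, hj, hsup, hinf, hsup', hinf'⟩ := h i (by omega)
    refine ⟨j, mem_Icc.2 ⟨j.zero_le, by omega⟩, ?_, ?_⟩
    · rw [← hIic, ← hIic]
      exact (rangeLE_iff _ _).2 ⟨hsup', hinf'⟩
    · rw [← hIco hn, ← hIco hm]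
      exact (rangeLE_iff _ _).2 ⟨hsup, hinf⟩
  · intro h i hi
    obtain ⟨j, hj, hpre, hsuf⟩ := h i (mem_Icc.2 ⟨i.zero_le, by omega⟩)
    rw [← hIic, ← hIic] at hpre
    rw [← hIco hn, ← hIco hm] at hsuf
    rw [mem_Icc] at hj
    have hj : j < B.length := by omega
    obtain ⟨hsup, hinf⟩ := (rangeLE_iff (nonempty_Ico.2 hi) (nonempty_Ico.2 hj)).1 hsuf
    obtain ⟨hsup', hinf'⟩ := (rangeLE_iff nonempty_Iic nonempty_Iic).1 hpre
    exact ⟨j, hj, hsup, hinf, hsup', hinf'⟩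

end Paths

end Dominance

/-- The pointer-advancement and algebraic definitions of dominance are
equivalent for nonempty finite sequences. -/
theorem ptrDom_iff_algDom (A B : List ℝ) (hA : A ≠ []) (hB : B ≠ []) :
    PtrDom A B ↔ AlgDom A B := by
  rw [Dominance.ptrDom_iff_reach hA hB, Dominance.algDom_iff_algBox hA hB]
  exact ⟨Dominance.Reach.algBox, fun h => h.reach (Nat.zero_le _) (Nat.zero_le _)⟩
end

section
/- If σ and τ are both partial schedules of a DAG G, then σ ∪· τ (σ followed by the nodes of τ not appearing in σ, in τ's order) is also a valid partial schedule of G. -/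
/-- `S` is a topological cut: no edge from the complement into `S`. -/
def IsTopCut {V : Type*} (E : V → V → Prop) (S : Set V) : Prop :=
  ∀ u v, E u v → v ∈ S → u ∈ S

/-- A partial schedule: a duplicate-free sequence of nodes all of whose
prefix sets are topological cuts. -/
def IsPartialSchedule {V : Type*} (E : V → V → Prop) (σ : List V) : Prop :=
  σ.Nodup ∧ ∀ i, IsTopCut E {v | v ∈ σ.take i}

/-!
Every prefix of `σ ∪· τ` is either a prefix of `σ`, or all of `σ` together with the nodes of
some prefix of `τ` that are not in `σ`. The latter has the same node set as the union of `σ`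
and that prefix of `τ`, and a union of topological cuts is a topological cut.
-/

theorem List.exists_take_filter_eq_filter_take {α : Type*} (p : α → Bool) :
    ∀ (l : List α) (j : ℕ), ∃ k, (l.filter p).take j = (l.take k).filter p
  | [], _ => ⟨0, by simp⟩
  | a :: t, j => by
    by_cases ha : p a
    · cases j with
      | zero => exact ⟨0, by simp⟩
      | succ j =>
        obtain ⟨k, hk⟩ := exists_take_filter_eq_filter_take p t j
        exact ⟨k + 1, by simp [ha, hk]⟩
    · obtain ⟨k, hk⟩ := exists_take_filter_eq_filter_take p t j
      exact ⟨k + 1, by simp [ha, hk]⟩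

theorem IsTopCut.union {V : Type*} {E : V → V → Prop} {S T : Set V}
    (hS : IsTopCut E S) (hT : IsTopCut E T) :
    IsTopCut E (S ∪ T) :=
  fun u v huv hv => hv.imp (hS u v huv) (hT u v huv)

theorem isTopCut_take_append {V : Type*} {E : V → V → Prop} {σ ρ : List V}
    (hσ : ∀ i, IsTopCut E {v | v ∈ σ.take i})
    (hρ : ∀ j, IsTopCut E ({v | v ∈ σ} ∪ {v | v ∈ ρ.take j})) (i : ℕ) :
    IsTopCut E {v | v ∈ (σ ++ ρ).take i} := by
  rw [List.take_append]
  by_cases hi : i ≤ σ.length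
  · simpa [Nat.sub_eq_zero_of_le hi] using hσ i
  · simpa only [List.take_of_length_le (Nat.le_of_not_le hi), List.mem_append,
      Set.ofPred_or] using hρ (i - σ.length)

theorem partialSchedule_union_general {V : Type*} [DecidableEq V] (E : V → V → Prop)
    (σ τ : List V) (hσ : IsPartialSchedule E σ) (hτ : IsPartialSchedule E τ) :
    IsPartialSchedule E (σ ++ τ.filter (fun v => decide (v ∉ σ))) := by
  obtain ⟨hσn, hσc⟩ := hσ
  obtain ⟨hτn, hτc⟩ := hτ
  refine ⟨List.nodup_append.2 ⟨hσn, hτn.filter _, ?_⟩, isTopCut_take_append hσc fun j => ?_⟩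
  · rintro a ha b hb rfl
    simp [ha] at hb
  · obtain ⟨k, hk⟩ := List.exists_take_filter_eq_filter_take (fun v => decide (v ∉ σ)) τ j
    have hσ_cut : IsTopCut E {v | v ∈ σ} := by simpa only [List.take_length] using hσc σ.length
    have hset : {v | v ∈ σ} ∪ {v | v ∈ (τ.filter fun v => decide (v ∉ σ)).take j} =
        {v | v ∈ σ} ∪ {v | v ∈ τ.take k} := by
      rw [hk]
      ext v
      by_cases hv : v ∈ σ <;> simp [hv]
    rw [hset]
    exact hσ_cut.union (hτc k)

/-- If `σ` and `τ` are partial schedules, then `σ ∪· τ`, i.e. `σ` followed by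
the nodes of `τ` not appearing in `σ` in `τ`'s order, is a valid partial
schedule. -/
theorem partialSchedule_union {V : Type*} [DecidableEq V] (E : V → V → Prop)
    (hacyc : ∀ v, ¬ Relation.TransGen E v v)
    (σ τ : List V) (hσ : IsPartialSchedule E σ) (hτ : IsPartialSchedule E τ) :
    IsPartialSchedule E (σ ++ τ.filter (fun v => decide (v ∉ σ))) :=
  partialSchedule_union_general E σ τ hσ hτ
end

section
/- Let G be a DAG with node weights w, L a topological cut of G of minimum cost, and R = V \ L. Then the induced subgraph G[R] is cut-nonnegative: every topological cut of G[R] has nonnegative total weight. Moreover, the reversal of G[L] with weights -w is also cut-nonnegative: every topological cut T of the reversal of G[L] (equivalently, every T ⊆ L closed under out-edges within G[L]) satisfies Σ_{v∈T} (-w(v)) ≥ 0. -/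
/-- Let `L` be a minimum-cost topological cut of a node-weighted DAG and
`R = V \ L`.  Then (1) the induced subgraph `G[R]` is cut-nonnegative, and
(2) the reversal of `G[L]` with negated weights is cut-nonnegative: every
topological cut `T` of the reversed graph on `L` (i.e. every `T ⊆ L` closed
under out-edges within `L`) satisfies `∑_{v ∈ T} (-w v) ≥ 0`. -/
theorem minCut_two_sides_cutNonneg {V : Type*} [Fintype V] [DecidableEq V]
    (E : V → V → Prop)
    (hacyc : ∀ v, ¬ Relation.TransGen E v v)
    (w : V → ℝ)
    (L : Finset V) (hL : IsTopCut E (↑L : Set V))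
    (hmin : ∀ L' : Finset V, IsTopCut E (↑L' : Set V) →
      ∑ v ∈ L, w v ≤ ∑ v ∈ L', w v) :
    (∀ S : Finset V, (∀ v ∈ S, v ∉ L) →
      (∀ u v, E u v → u ∉ L → v ∈ S → u ∈ S) → 0 ≤ ∑ v ∈ S, w v) ∧
    (∀ T : Finset V, T ⊆ L →
      (∀ u v, E u v → v ∈ L → u ∈ T → v ∈ T) → 0 ≤ ∑ v ∈ T, (-w v)) := by
  constructor
  · intro S hSR hSclosed
    have hdisj : Disjoint L S := by
      rw [Finset.disjoint_right]; intro v hv; exact hSR v hv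
    have hcut : IsTopCut E (↑(L ∪ S) : Set V) := by
      intro u v huv hv
      simp only [Finset.coe_union, Set.mem_union, Finset.mem_coe] at hv ⊢
      rcases hv with hv | hv
      · exact Or.inl (hL u v huv hv)
      · by_cases hu : u ∈ L
        · exact Or.inl hu
        · exact Or.inr (hSclosed u v huv hu hv)
    have := hmin (L ∪ S) hcut
    rw [Finset.sum_union hdisj] at this
    linarith
  · intro T hTL hTclosed
    have hcut : IsTopCut E (↑(L \ T) : Set V) := by
      intro u v huv hv
      simp only [Finset.coe_sdiff, Set.mem_diff, Finset.mem_coe] at hv ⊢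
      obtain ⟨hvL, hvT⟩ := hv
      refine ⟨hL u v huv hvL, fun huT => hvT (hTclosed u v huv hvL huT)⟩
    have := hmin (L \ T) hcut
    have hsplit : ∑ v ∈ L \ T, w v + ∑ v ∈ T, w v = ∑ v ∈ L, w v :=
      Finset.sum_sdiff hTL
    rw [Finset.sum_neg_distrib]
    linarith
end

section
/- Caduceus graphs are left-hereditary: if G is a caduceus graph and U is a topological cut of G, then the graph obtained from the induced subgraph G[U] by adding a new sink node connected from every node of G[U] with no remaining out-neighbor is again a caduceus graph. -/
/-- `x` and `y` appear consecutively (in this order) in the list `l`. -/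
def AdjIn {V : Type*} (l : List V) (x y : V) : Prop :=
  ∃ k : ℕ, l[k]? = some x ∧ l[k + 1]? = some y

/-- The digraph with edge relation `E` is a caduceus graph: there is a staff
(a nonempty duplicate-free directed path `s`) and a list of bends, each bend
being a directed path from a staff node `bd.1` to a strictly later staff node
`bd.2.2` through a nonempty list `bd.2.1` of internal nodes; internal bend
nodes are distinct across bends and disjoint from the staff; every vertex is
a staff node or an internal bend node; and the edges are exactly the
consecutive pairs of the staff and of the bends. -/
def IsCaduceus {V : Type*} (E : V → V → Prop) : Prop :=
  ∃ (s : List V) (bends : List (V × List V × V)),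
    s ≠ [] ∧ s.Nodup ∧
    (∀ bd ∈ bends, bd.2.1 ≠ [] ∧
      ∃ i j : ℕ, i < j ∧ s[i]? = some bd.1 ∧ s[j]? = some bd.2.2) ∧
    (bends.map (fun bd => bd.2.1)).flatten.Nodup ∧
    (∀ bd ∈ bends, ∀ u ∈ bd.2.1, u ∉ s) ∧
    (∀ v : V, v ∈ s ∨ ∃ bd ∈ bends, v ∈ bd.2.1) ∧
    (∀ x y, E x y ↔
      (AdjIn s x y ∨ ∃ bd ∈ bends, AdjIn (bd.1 :: (bd.2.1 ++ [bd.2.2])) x y))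

/-!
Since `U` is closed under predecessors, it meets the staff in a prefix `t` and each bend in a
prefix of its internal nodes, and the edges of `G[U]` are the consecutive pairs of these
truncated paths. A node of `G[U]` is a sink exactly when it ends a truncated path that was
actually cut: the last surviving internal node of a bend whose end left `U`, or the last node `w`
of `t` when no bend leaves `w` into `U`. Hence AddSink(G[U]) is a caduceus graph: its staff is
`t`, continued along the surviving part of one bend leaving `w` into `U` if there is one, and then
the new sink; every other bend meeting `U` in an internal node survives, and ends in the new sink
if its end left `U`.
-/

section ListAdjacency

variable {α β : Type*} {l l₁ l₂ : List α} {a b x y : α}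

theorem AdjIn.mem_left (h : AdjIn l x y) : x ∈ l :=
  let ⟨_, hk, _⟩ := h; List.mem_of_getElem? hk

theorem AdjIn.mem_right (h : AdjIn l x y) : y ∈ l :=
  let ⟨_, _, hk⟩ := h; List.mem_of_getElem? hk

theorem not_adjIn_nil : ¬ AdjIn ([] : List α) x y := by
  simp [AdjIn]

theorem adjIn_cons_iff : AdjIn (a :: l) x y ↔ (x = a ∧ l.head? = some y) ∨ AdjIn l x y := by
  constructor
  · rintro ⟨_ | k, h₁, h₂⟩
    · simp_all [List.head?_eq_getElem?]
    · exact Or.inr ⟨k, h₁, h₂⟩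
  · rintro (⟨rfl, h⟩ | ⟨k, h₁, h₂⟩)
    · exact ⟨0, rfl, by simpa [List.head?_eq_getElem?] using h⟩
    · exact ⟨k + 1, h₁, h₂⟩

theorem not_adjIn_singleton : ¬ AdjIn [a] x y := by
  simp [adjIn_cons_iff, not_adjIn_nil]

theorem adjIn_append_iff : AdjIn (l₁ ++ l₂) x y ↔
    AdjIn l₁ x y ∨ AdjIn l₂ x y ∨ (l₁.getLast? = some x ∧ l₂.head? = some y) := by
  induction l₁ with
  | nil => simp [not_adjIn_nil]
  | cons a l ih =>
    rw [List.cons_append, adjIn_cons_iff, ih, adjIn_cons_iff]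
    cases l with
    | nil => simp [not_adjIn_nil, eq_comm, or_comm]
    | cons b l => simp only [List.cons_append, List.head?_cons, List.getLast?_cons_cons]; tauto

theorem adjIn_append_singleton_iff :
    AdjIn (l ++ [b]) x y ↔ AdjIn l x y ∨ (l.getLast? = some x ∧ y = b) := by
  simp [adjIn_append_iff, not_adjIn_singleton, eq_comm]

theorem AdjIn.of_infix (h : AdjIn l₁ x y) (hl : l₁ <:+: l₂) : AdjIn l₂ x y := by
  obtain ⟨s, t, rfl⟩ := hl
  exact adjIn_append_iff.2 (Or.inl (adjIn_append_iff.2 (Or.inr (Or.inl h))))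

theorem adjIn_map (f : α → β) {x y : β} :
    AdjIn (l.map f) x y ↔ ∃ a b, AdjIn l a b ∧ f a = x ∧ f b = y := by
  constructor
  · rintro ⟨k, h₁, h₂⟩
    rw [List.getElem?_map, Option.map_eq_some_iff] at h₁ h₂
    obtain ⟨a, ha, rfl⟩ := h₁
    obtain ⟨b, hb, rfl⟩ := h₂
    exact ⟨a, b, ⟨k, ha, hb⟩, rfl, rfl⟩
  · rintro ⟨a, b, ⟨k, h₁, h₂⟩, rfl, rfl⟩
    exact ⟨k, by simp [h₁], by simp [h₂]⟩

theorem exists_adjIn_of_mem (hx : x ∈ l) (hlast : l.getLast? ≠ some x) :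
    ∃ y, AdjIn l x y := by
  obtain ⟨l₁, l₂, rfl⟩ := List.append_of_mem hx
  obtain _ | ⟨y, l₂⟩ := l₂
  · simp at hlast
  · exact ⟨y, adjIn_append_iff.2 (Or.inr (Or.inl (adjIn_cons_iff.2 (Or.inl ⟨rfl, rfl⟩))))⟩

theorem not_adjIn_of_getLast? (hl : l.Nodup) (hx : l.getLast? = some x) : ¬ AdjIn l x y := by
  obtain ⟨l', rfl⟩ := List.getLast?_eq_some_iff.1 hx
  rw [adjIn_append_singleton_iff]
  have hx' : x ∉ l' := fun h => (List.nodup_append.1 hl).2.2 x h x (by simp) rfl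
  rintro (h | ⟨h, -⟩)
  · exact hx' h.mem_left
  · exact hx' (List.mem_of_getLast? h)

theorem getLast?_eq_some_iff_forall_not_adjIn (hl : l.Nodup) (hx : x ∈ l) :
    l.getLast? = some x ↔ ∀ y, ¬ AdjIn l x y :=
  ⟨fun h _ => not_adjIn_of_getLast? hl h,
    fun h => by_contra fun hlast => (h _ (exists_adjIn_of_mem hx hlast).choose_spec)⟩

theorem pair_sublist_iff_exists_getElem? :
    [a, b].Sublist l ↔ ∃ i j : ℕ, i < j ∧ l[i]? = some a ∧ l[j]? = some b := by
  constructor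
  · rw [List.sublist_iff_exists_orderEmbedding_getElem?_eq]
    rintro ⟨f, hf⟩
    exact ⟨f 0, f 1, f.strictMono zero_lt_one, (hf 0).symm, (hf 1).symm⟩
  · rintro ⟨i, j, hij, hi, hj⟩
    rw [← List.take_append_drop j l]
    refine List.Sublist.append (l₁ := [a]) (r₁ := [b]) ?_ ?_
    · exact List.singleton_sublist.2 (List.mem_of_getElem? (by rwa [List.getElem?_take_of_lt hij]))
    · exact List.singleton_sublist.2 (List.mem_of_getElem? (i := 0) (by simpa using hj))

theorem getLast?_ne_of_pair_sublist (hl : l.Nodup) (h : [a, b].Sublist l) :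
    l.getLast? ≠ some a := by
  intro hlast
  obtain ⟨l', rfl⟩ := List.getLast?_eq_some_iff.1 hlast
  have ha : a ∉ l' := fun h => (List.nodup_append.1 hl).2.2 a h a (by simp) rfl
  have h' := h.reverse
  simp only [List.reverse_cons, List.reverse_nil, List.nil_append, List.reverse_append,
    List.cons_append] at h'
  rcases List.sublist_cons_iff.1 h' with h' | ⟨r, hr, h'⟩
  · exact ha (List.mem_reverse.1 (h'.subset (by simp)))
  · obtain ⟨rfl, rfl⟩ := List.cons_eq_cons.1 hr
    exact ha (List.mem_reverse.1 (h'.subset (by simp)))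

end ListAdjacency

def DownClosedAlong {α : Type*} (p : α → Prop) (l : List α) : Prop :=
  ∀ x y, AdjIn l x y → p y → p x

namespace DownClosedAlong

variable {α : Type*} {p : α → Prop} {l l₁ l₂ : List α} {a x y : α}

theorem of_infix (h : DownClosedAlong p l₂) (hl : l₁ <:+: l₂) : DownClosedAlong p l₁ :=
  fun x y hxy => h x y (hxy.of_infix hl)

theorem forall_mem_of_append (h : DownClosedAlong p (l₁ ++ x :: l₂)) (hx : p x) :
    ∀ y ∈ l₁, p y := by
  induction l₁ with
  | nil => simp
  | cons a l ih =>
    have ih := ih (h.of_infix (List.suffix_cons a _).isInfix)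
    obtain ⟨z, hz, hpz⟩ : ∃ z, (l ++ x :: l₂).head? = some z ∧ p z := by
      cases l with
      | nil => exact ⟨x, rfl, hx⟩
      | cons b l => exact ⟨b, rfl, ih b (by simp)⟩
    have ha : p a := h a z (adjIn_cons_iff.2 (Or.inl ⟨rfl, hz⟩)) hpz
    simpa [ha] using ih

theorem head_of_mem (h : DownClosedAlong p (a :: l)) (hx : x ∈ a :: l) (px : p x) : p a := by
  obtain ⟨l₁, l₂, hl⟩ := List.append_of_mem hx
  cases l₁ with
  | nil => simp_all
  | cons b l₁ =>
    obtain ⟨rfl, rfl⟩ := List.cons_eq_cons.1 hl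
    exact (hl ▸ h).forall_mem_of_append px a (by simp)

variable [DecidablePred p]

theorem takeWhile_eq_filter (h : DownClosedAlong p l) :
    l.takeWhile (fun x => p x) = l.filter (fun x => p x) := by
  induction l with
  | nil => rfl
  | cons a l ih =>
    by_cases ha : p a
    · simp [ha, ih (h.of_infix (List.suffix_cons a l).isInfix)]
    · have hl : ∀ y ∈ l, ¬ p y := fun y hy => mt (h.head_of_mem (by simp [hy])) ha
      simpa [ha, List.filter_eq_nil_iff] using hl

theorem mem_takeWhile_iff (h : DownClosedAlong p l) :
    x ∈ l.takeWhile (fun x => p x) ↔ x ∈ l ∧ p x := by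
  simp [h.takeWhile_eq_filter]

theorem adjIn_takeWhile_iff (h : DownClosedAlong p l) :
    AdjIn (l.takeWhile (fun x => p x)) x y ↔ AdjIn l x y ∧ p y := by
  induction l with
  | nil => simp [not_adjIn_nil]
  | cons a l ih =>
    have ih := ih (h.of_infix (List.suffix_cons a l).isInfix)
    by_cases ha : p a
    · rw [List.takeWhile_cons_of_pos (by simpa using ha), adjIn_cons_iff, adjIn_cons_iff, ih,
        List.head?_takeWhile]
      simp only [Option.filter_eq_some_iff, decide_eq_true_eq]
      tauto
    · rw [List.takeWhile_cons_of_neg (by simpa using ha)]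
      exact iff_of_false not_adjIn_nil
        fun ⟨hxy, hy⟩ => ha (h.head_of_mem hxy.mem_left (h x y hxy hy))

theorem getLast?_takeWhile_eq_some_iff (h : DownClosedAlong p l) (hl : l.Nodup) (hx : x ∈ l)
    (px : p x) :
    (l.takeWhile (fun x => p x)).getLast? = some x ↔ ∀ z, p z → ¬ AdjIn l x z := by
  rw [getLast?_eq_some_iff_forall_not_adjIn (hl.sublist (List.takeWhile_sublist _))
    (h.mem_takeWhile_iff.2 ⟨hx, px⟩)]
  simp only [h.adjIn_takeWhile_iff]
  exact ⟨fun H z hz hxz => H z ⟨hxz, hz⟩, fun H z hxz => H z hxz.2 hxz.1⟩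

end DownClosedAlong

section SubtypeOption

variable {V : Type*} (U : Set V) [DecidablePred (· ∈ U)]

/-- Vertices outside `U` go to the new sink `none`; this is how a bend whose end left `U`
becomes a bend into the sink. -/
def toSubtypeOption (v : V) : Option {v // v ∈ U} := if h : v ∈ U then some ⟨v, h⟩ else none

variable {U} {l : List V} {v : V} {u w : {v // v ∈ U}} {o o' : Option {v // v ∈ U}}

@[simp]
theorem toSubtypeOption_eq_some_iff : toSubtypeOption U v = some u ↔ v = u := by
  unfold toSubtypeOption
  split_ifs with h
  · simp [Subtype.ext_iff]
  · simpa using fun hv : v = u => h (hv ▸ u.2)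

@[simp]
theorem toSubtypeOption_eq_none_iff : toSubtypeOption U v = none ↔ v ∉ U := by
  unfold toSubtypeOption
  split_ifs with h <;> simp [h]

theorem toSubtypeOption_injOn : Set.InjOn (toSubtypeOption U) U := fun _ hx _ _ h =>
  (toSubtypeOption_eq_some_iff.1 (h.symm.trans (dif_pos hx))).symm

theorem none_not_mem_map_toSubtypeOption (hl : ∀ x ∈ l, x ∈ U) :
    none ∉ l.map (toSubtypeOption U) := by
  simpa using hl

theorem adjIn_map_toSubtypeOption :
    AdjIn (l.map (toSubtypeOption U)) (some u) (some w) ↔ AdjIn l u w := by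
  simp [adjIn_map]

theorem adjIn_map_toSubtypeOption_append_none_iff (hl : ∀ x ∈ l, x ∈ U) :
    AdjIn (l.map (toSubtypeOption U) ++ [o]) (some u) none ↔
      l.getLast? = some u.1 ∧ o = none := by
  have h : ¬ AdjIn (l.map (toSubtypeOption U)) (some u) none :=
    fun h' => none_not_mem_map_toSubtypeOption hl h'.mem_right
  rw [adjIn_append_singleton_iff, List.getLast?_map]
  simp [h, eq_comm]

theorem not_adjIn_map_toSubtypeOption_append_none (hl : ∀ x ∈ l, x ∈ U) :
    ¬ AdjIn (l.map (toSubtypeOption U) ++ [o]) none o' := by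
  have h := none_not_mem_map_toSubtypeOption hl
  rw [adjIn_append_singleton_iff]
  rintro (h' | ⟨h', -⟩)
  exacts [h h'.mem_left, h (List.mem_of_getLast? h')]

end SubtypeOption

def bendPath {V : Type*} (bd : V × List V × V) : List V := bd.1 :: (bd.2.1 ++ [bd.2.2])

structure Caduceus {V : Type*} (E : V → V → Prop) where
  staff : List V
  bends : List (V × List V × V)
  staff_ne_nil : staff ≠ []
  nodup_staff : staff.Nodup
  internal_ne_nil : ∀ bd ∈ bends, bd.2.1 ≠ []
  -- the bend leaves the staff strictly before it returns to it
  pair_sublist_staff : ∀ bd ∈ bends, [bd.1, bd.2.2].Sublist staff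
  nodup_internals : (bends.map (fun bd => bd.2.1)).flatten.Nodup
  internal_not_mem_staff : ∀ bd ∈ bends, ∀ u ∈ bd.2.1, u ∉ staff
  mem_staff_or_internal : ∀ v, v ∈ staff ∨ ∃ bd ∈ bends, v ∈ bd.2.1
  adj_iff : ∀ x y, E x y ↔ AdjIn staff x y ∨ ∃ bd ∈ bends, AdjIn (bendPath bd) x y

def IsTopologicalCut {V : Type*} (E : V → V → Prop) (U : Set V) : Prop :=
  ∀ u v, E u v → v ∈ U → u ∈ U

/-- AddSink(G[U]), with `none` as the new sink. -/
def restrictAddSink {V : Type*} (E : V → V → Prop) (U : Set V) :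
    Option {v // v ∈ U} → Option {v // v ∈ U} → Prop
  | none, _ => False
  | some u, some v => E u.1 v.1
  | some u, none => ∀ z : {v // v ∈ U}, ¬ E u.1 z.1

section Bridge

variable {V : Type*} {E : V → V → Prop}

theorem IsCaduceus.nonempty_caduceus (h : IsCaduceus E) : Nonempty (Caduceus E) := by
  obtain ⟨s, bends, h₁, h₂, h₃, h₄, h₅, h₆, h₇⟩ := h
  exact ⟨⟨s, bends, h₁, h₂, fun bd hbd => (h₃ bd hbd).1,
    fun bd hbd => pair_sublist_iff_exists_getElem?.2 (h₃ bd hbd).2, h₄, h₅, h₆, h₇⟩⟩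

theorem Caduceus.isCaduceus (C : Caduceus E) : IsCaduceus E :=
  ⟨C.staff, C.bends, C.staff_ne_nil, C.nodup_staff,
    fun bd hbd => ⟨C.internal_ne_nil bd hbd,
      pair_sublist_iff_exists_getElem?.1 (C.pair_sublist_staff bd hbd)⟩,
    C.nodup_internals, C.internal_not_mem_staff, C.mem_staff_or_internal, C.adj_iff⟩

end Bridge

namespace Caduceus

variable {V : Type*} {E : V → V → Prop} (C : Caduceus E) {U : Set V} {bd bd' : V × List V × V}
  {u x y z : V}

theorem adj_of_adjIn_staff (h : AdjIn C.staff x y) : E x y :=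
  (C.adj_iff x y).2 (Or.inl h)

theorem adj_of_adjIn_bendPath (hbd : bd ∈ C.bends) (h : AdjIn (bendPath bd) x y) : E x y :=
  (C.adj_iff x y).2 (Or.inr ⟨bd, hbd, h⟩)

theorem start_mem_staff (hbd : bd ∈ C.bends) : bd.1 ∈ C.staff :=
  (C.pair_sublist_staff bd hbd).subset (by simp)

theorem end_mem_staff (hbd : bd ∈ C.bends) : bd.2.2 ∈ C.staff :=
  (C.pair_sublist_staff bd hbd).subset (by simp)

theorem nodup_internal (hbd : bd ∈ C.bends) : bd.2.1.Nodup :=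
  C.nodup_internals.sublist
    (List.sublist_flatten_of_mem (List.mem_map_of_mem (f := fun bd => bd.2.1) hbd))

theorem eq_of_mem_internal (hbd : bd ∈ C.bends) (hbd' : bd' ∈ C.bends) (hx : x ∈ bd.2.1)
    (hx' : x ∈ bd'.2.1) : bd = bd' := by
  by_contra hne
  have : Std.Symm (fun b b' : V × List V × V => List.Disjoint b.2.1 b'.2.1) :=
    ⟨fun _ _ h => h.symm⟩
  exact (List.pairwise_map.1 (List.nodup_flatten.1 C.nodup_internals).2).forall
    hbd hbd' hne hx hx'

theorem nodup_bendPath (hbd : bd ∈ C.bends) : (bendPath bd).Nodup := by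
  have hne : bd.1 ≠ bd.2.2 := by
    simpa using C.nodup_staff.sublist (C.pair_sublist_staff bd hbd)
  have hL := C.internal_not_mem_staff bd hbd
  simp only [bendPath, List.nodup_cons, List.nodup_append, List.mem_append, List.mem_singleton,
    not_or]
  refine ⟨⟨fun h => hL _ h (C.start_mem_staff hbd), hne⟩, C.nodup_internal hbd, by simp, ?_⟩
  rintro x hx _ rfl rfl
  exact hL _ hx (C.end_mem_staff hbd)

theorem adj_iff_of_mem_internal (hbd : bd ∈ C.bends) (hu : u ∈ bd.2.1) :
    E u z ↔ AdjIn (bendPath bd) u z := by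
  have hu' := C.internal_not_mem_staff bd hbd u hu
  refine ⟨fun h => ?_, C.adj_of_adjIn_bendPath hbd⟩
  rcases (C.adj_iff u z).1 h with h | ⟨bd', hbd', h⟩
  · exact absurd h.mem_left hu'
  · have hmem := h.mem_left
    simp only [bendPath, List.mem_cons, List.mem_append, List.not_mem_nil, or_false] at hmem
    rcases hmem with rfl | hmem | rfl
    · exact absurd (C.start_mem_staff hbd') hu'
    · rwa [C.eq_of_mem_internal hbd hbd' hu hmem]
    · exact absurd (C.end_mem_staff hbd') hu'

theorem adjIn_bendPath_iff_of_mem_staff (hbd : bd ∈ C.bends) (hu : u ∈ C.staff) :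
    AdjIn (bendPath bd) u z ↔ u = bd.1 ∧ bd.2.1.head? = some z := by
  have hu' : u ∉ bd.2.1 := fun h => C.internal_not_mem_staff bd hbd u h hu
  obtain ⟨v, hv⟩ : ∃ v, bd.2.1.head? = some v :=
    Option.ne_none_iff_exists'.1 (by simpa using C.internal_ne_nil bd hbd)
  rw [bendPath, adjIn_cons_iff, adjIn_append_singleton_iff, List.head?_append, hv]
  constructor
  · rintro (h | h | ⟨h, -⟩)
    · exact h
    · exact absurd h.mem_left hu'
    · exact absurd (List.mem_of_getLast? h) hu'
  · exact Or.inl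

theorem downClosedAlong_staff (hU : IsTopologicalCut E U) : DownClosedAlong (· ∈ U) C.staff :=
  fun x y h => hU x y (C.adj_of_adjIn_staff h)

theorem downClosedAlong_bendPath (hU : IsTopologicalCut E U) (hbd : bd ∈ C.bends) :
    DownClosedAlong (· ∈ U) (bendPath bd) :=
  fun x y h => hU x y (C.adj_of_adjIn_bendPath hbd h)

theorem downClosedAlong_internal (hU : IsTopologicalCut E U) (hbd : bd ∈ C.bends) :
    DownClosedAlong (· ∈ U) bd.2.1 :=
  (C.downClosedAlong_bendPath hU hbd).of_infix ⟨[bd.1], [bd.2.2], rfl⟩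

theorem forall_mem_bendPath_of_end_mem (hU : IsTopologicalCut E U) (hbd : bd ∈ C.bends)
    (hb : bd.2.2 ∈ U) : ∀ x ∈ bendPath bd, x ∈ U := by
  have h := (C.downClosedAlong_bendPath hU hbd).forall_mem_of_append
    (l₁ := bd.1 :: bd.2.1) (l₂ := []) hb
  simp only [bendPath, List.mem_cons, List.mem_append, List.not_mem_nil, or_false] at h ⊢
  rintro x (rfl | hx | rfl)
  exacts [h _ (Or.inl rfl), h x (Or.inr hx), hb]

variable (U) [DecidablePred (· ∈ U)]

def cutStaff : List V := C.staff.takeWhile (· ∈ U)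

def cutInternal (bd : V × List V × V) : List V := bd.2.1.takeWhile (· ∈ U)

def cutPath (bd : V × List V × V) : List V := bd.1 :: (cutInternal U bd ++ [bd.2.2])

def restrictBend (bd : V × List V × V) :
    Option {v // v ∈ U} × List (Option {v // v ∈ U}) × Option {v // v ∈ U} :=
  (toSubtypeOption U bd.1, (cutInternal U bd).map (toSubtypeOption U), toSubtypeOption U bd.2.2)

variable {U}

theorem mem_cutStaff_iff (hU : IsTopologicalCut E U) :
    x ∈ C.cutStaff U ↔ x ∈ C.staff ∧ x ∈ U :=
  (C.downClosedAlong_staff hU).mem_takeWhile_iff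

theorem adjIn_cutStaff_iff (hU : IsTopologicalCut E U) :
    AdjIn (C.cutStaff U) x y ↔ AdjIn C.staff x y ∧ y ∈ U :=
  (C.downClosedAlong_staff hU).adjIn_takeWhile_iff

theorem pair_sublist_cutStaff (hU : IsTopologicalCut E U) (hbd : bd ∈ C.bends) (ha : bd.1 ∈ U)
    (hb : bd.2.2 ∈ U) : [bd.1, bd.2.2].Sublist (C.cutStaff U) := by
  rw [cutStaff, (C.downClosedAlong_staff hU).takeWhile_eq_filter]
  simpa [ha, hb] using (C.pair_sublist_staff bd hbd).filter (fun x => decide (x ∈ U))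

theorem mem_cutInternal_iff (hU : IsTopologicalCut E U) (hbd : bd ∈ C.bends) :
    x ∈ cutInternal U bd ↔ x ∈ bd.2.1 ∧ x ∈ U :=
  (C.downClosedAlong_internal hU hbd).mem_takeWhile_iff

theorem cutInternal_eq_nil_iff :
    cutInternal U bd = [] ↔ ∀ z, bd.2.1.head? = some z → z ∉ U := by
  rw [← List.head?_eq_none_iff, cutInternal, List.head?_takeWhile]
  cases bd.2.1.head? <;> simp

theorem cutInternal_eq_of_end_mem (hU : IsTopologicalCut E U) (hbd : bd ∈ C.bends)
    (hb : bd.2.2 ∈ U) : cutInternal U bd = bd.2.1 :=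
  List.takeWhile_eq_self_iff.2 fun x hx => by
    simpa using C.forall_mem_bendPath_of_end_mem hU hbd hb x (by simp [bendPath, hx])

theorem start_mem_of_cutInternal_ne_nil (hU : IsTopologicalCut E U) (hbd : bd ∈ C.bends)
    (h : cutInternal U bd ≠ []) : bd.1 ∈ U := by
  obtain ⟨y, hy⟩ := List.exists_mem_of_ne_nil _ h
  obtain ⟨hyL, hyU⟩ := (C.mem_cutInternal_iff hU hbd).1 hy
  exact (C.downClosedAlong_bendPath hU hbd).head_of_mem (by simp [hyL]) hyU

theorem takeWhile_bendPath_of_end_not_mem (hU : IsTopologicalCut E U) (hbd : bd ∈ C.bends)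
    (ha : bd.1 ∈ U) (hb : bd.2.2 ∉ U) :
    (bendPath bd).takeWhile (· ∈ U) = bd.1 :: cutInternal U bd := by
  rw [(C.downClosedAlong_bendPath hU hbd).takeWhile_eq_filter, cutInternal,
    (C.downClosedAlong_internal hU hbd).takeWhile_eq_filter]
  simp [bendPath, ha, hb]

theorem adjIn_cutPath_iff (hU : IsTopologicalCut E U) (hbd : bd ∈ C.bends) (ha : bd.1 ∈ U)
    (hy : y ∈ U) : AdjIn (cutPath U bd) x y ↔ AdjIn (bendPath bd) x y := by
  by_cases hb : bd.2.2 ∈ U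
  · rw [cutPath, C.cutInternal_eq_of_end_mem hU hbd hb, bendPath]
  · have hyb : y ≠ bd.2.2 := fun h => hb (h ▸ hy)
    rw [cutPath, ← List.cons_append, adjIn_append_singleton_iff,
      ← C.takeWhile_bendPath_of_end_not_mem hU hbd ha hb,
      (C.downClosedAlong_bendPath hU hbd).adjIn_takeWhile_iff]
    simp [hy, hyb]

theorem adjIn_bendPath_iff (hU : IsTopologicalCut E U) (hbd : bd ∈ C.bends) (hy : y ∈ U) :
    AdjIn (bendPath bd) x y ↔ cutInternal U bd ≠ [] ∧ AdjIn (cutPath U bd) x y := by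
  constructor
  · intro h
    have ha : bd.1 ∈ U := (C.downClosedAlong_bendPath hU hbd).head_of_mem h.mem_left
      (hU x y (C.adj_of_adjIn_bendPath hbd h) hy)
    have h' := (C.adjIn_cutPath_iff hU hbd ha hy).2 h
    refine ⟨fun hP => ?_, h'⟩
    rw [cutPath, hP] at h'
    have hb : bd.2.2 ∈ U := by
      simp only [List.nil_append, adjIn_cons_iff, List.head?_cons, List.head?_nil,
        Option.some.injEq, reduceCtorEq, and_false, not_adjIn_nil, or_false] at h'
      exact h'.2 ▸ hy
    exact C.internal_ne_nil bd hbd ((C.cutInternal_eq_of_end_mem hU hbd hb).symm.trans hP)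
  · rintro ⟨hP, h⟩
    exact (C.adjIn_cutPath_iff hU hbd (C.start_mem_of_cutInternal_ne_nil hU hbd hP) hy).1 h

theorem adj_iff_cut (hU : IsTopologicalCut E U) (hy : y ∈ U) :
    E x y ↔ AdjIn (C.cutStaff U) x y ∨
      ∃ bd ∈ C.bends, cutInternal U bd ≠ [] ∧ AdjIn (cutPath U bd) x y := by
  rw [C.adj_iff, C.adjIn_cutStaff_iff hU, and_iff_left hy]
  refine or_congr_right (exists_congr fun bd => ?_)
  exact ⟨fun ⟨hbd, h⟩ => ⟨hbd, (C.adjIn_bendPath_iff hU hbd hy).1 h⟩,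
    fun ⟨hbd, h⟩ => ⟨hbd, (C.adjIn_bendPath_iff hU hbd hy).2 h⟩⟩

theorem sink_iff_of_mem_internal (hU : IsTopologicalCut E U) (hbd : bd ∈ C.bends)
    (hu : u ∈ bd.2.1) (huU : u ∈ U) :
    (∀ z ∈ U, ¬ E u z) ↔ bd.2.2 ∉ U ∧ (cutInternal U bd).getLast? = some u := by
  have hd := C.downClosedAlong_bendPath hU hbd
  have hmem : u ∈ bendPath bd := by simp [bendPath, hu]
  have hus := C.internal_not_mem_staff bd hbd u hu
  simp only [C.adj_iff_of_mem_internal hbd hu]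
  rw [← hd.getLast?_takeWhile_eq_some_iff (C.nodup_bendPath hbd) hmem huU]
  by_cases hb : bd.2.2 ∈ U
  · rw [List.takeWhile_eq_self_iff.2 (by simpa using C.forall_mem_bendPath_of_end_mem hU hbd hb)]
    rw [bendPath, ← List.cons_append, List.getLast?_concat, Option.some_inj]
    exact iff_of_false (fun h => hus (h ▸ C.end_mem_staff hbd)) (fun h => h.1 hb)
  · have hau : bd.1 ≠ u := fun h => hus (h ▸ C.start_mem_staff hbd)
    rw [C.takeWhile_bendPath_of_end_not_mem hU hbd (hd.head_of_mem hmem huU) hb,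
      List.getLast?_cons, and_iff_right hb]
    cases (cutInternal U bd).getLast? <;> simp [hau]

theorem sink_iff_of_mem_staff (hU : IsTopologicalCut E U) (hu : u ∈ C.staff) (huU : u ∈ U) :
    (∀ z ∈ U, ¬ E u z) ↔ (C.cutStaff U).getLast? = some u ∧
      ∀ bd ∈ C.bends, bd.1 = u → cutInternal U bd = [] := by
  rw [cutStaff, (C.downClosedAlong_staff hU).getLast?_takeWhile_eq_some_iff C.nodup_staff hu huU]
  simp only [C.adj_iff, not_or, not_exists, not_and]
  constructor
  · intro h
    refine ⟨fun z hz => (h z hz).1, fun bd hbd hbu => cutInternal_eq_nil_iff.2 fun z hz' hz =>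
      (h z hz).2 bd hbd ((C.adjIn_bendPath_iff_of_mem_staff hbd hu).2 ⟨hbu.symm, hz'⟩)⟩
  · rintro ⟨hs, hb⟩ z hz
    refine ⟨hs z hz, fun bd hbd h => ?_⟩
    obtain ⟨rfl, hz'⟩ := (C.adjIn_bendPath_iff_of_mem_staff hbd hu).1 h
    exact cutInternal_eq_nil_iff.1 (hb bd hbd rfl) z hz' hz

theorem bendPath_restrictBend :
    bendPath (restrictBend U bd) = (cutPath U bd).map (toSubtypeOption U) := by
  simp [bendPath, restrictBend, cutPath]

variable (U) [DecidableEq V]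

/-- If a bend leaves the last node of `cutStaff` into `U`, that node is no sink, so the new staff
(`spine`, followed by the sink) continues along the surviving part of the first such bend. -/
def pivot : Option (V × List V × V) :=
  C.bends.find? fun bd => (C.cutStaff U).getLast? = some bd.1 ∧ cutInternal U bd ≠ []

def spine : List V := C.cutStaff U ++ ((C.pivot U).map (cutInternal U)).getD []

def cutBends : List (V × List V × V) :=
  C.bends.filter fun bd => cutInternal U bd ≠ [] ∧ C.pivot U ≠ some bd

variable {U}

theorem pivot_spec (h : C.pivot U = some bd) :
    bd ∈ C.bends ∧ (C.cutStaff U).getLast? = some bd.1 ∧ cutInternal U bd ≠ [] :=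
  ⟨List.mem_of_find?_eq_some h, by simpa using List.find?_some h⟩

theorem pivot_eq_none_iff : C.pivot U = none ↔
    ∀ bd ∈ C.bends, (C.cutStaff U).getLast? = some bd.1 → cutInternal U bd = [] := by
  simp [pivot, List.find?_eq_none]

theorem end_not_mem_of_pivot (hU : IsTopologicalCut E U) (h : C.pivot U = some bd) :
    bd.2.2 ∉ U := by
  obtain ⟨hbd, hlast, -⟩ := C.pivot_spec h
  intro hb
  have ha : bd.1 ∈ U := ((C.mem_cutStaff_iff hU).1 (List.mem_of_getLast? hlast)).2
  exact getLast?_ne_of_pair_sublist (C.nodup_staff.sublist (List.takeWhile_sublist _))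
    (C.pair_sublist_cutStaff hU hbd ha hb) hlast

theorem spine_of_pivot_eq_none (h : C.pivot U = none) : C.spine U = C.cutStaff U := by
  simp [spine, h]

theorem spine_of_pivot_eq_some (h : C.pivot U = some bd) :
    C.spine U = C.cutStaff U ++ cutInternal U bd := by
  simp [spine, h]

theorem cutStaff_sublist_spine : (C.cutStaff U).Sublist (C.spine U) :=
  List.sublist_append_left _ _

theorem forall_mem_spine (hU : IsTopologicalCut E U) : ∀ x ∈ C.spine U, x ∈ U := by
  intro x hx
  cases hp : C.pivot U with
  | none => exact ((C.mem_cutStaff_iff hU).1 (C.spine_of_pivot_eq_none hp ▸ hx)).2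
  | some bd =>
    rcases List.mem_append.1 (C.spine_of_pivot_eq_some hp ▸ hx) with hx | hx
    · exact ((C.mem_cutStaff_iff hU).1 hx).2
    · exact ((mem_cutInternal_iff C hU (C.pivot_spec hp).1).1 hx).2

theorem nodup_spine (hU : IsTopologicalCut E U) : (C.spine U).Nodup := by
  have ht : (C.cutStaff U).Nodup := C.nodup_staff.sublist (List.takeWhile_sublist _)
  cases hp : C.pivot U with
  | none => rwa [C.spine_of_pivot_eq_none hp]
  | some bd =>
    have hbd := (C.pivot_spec hp).1
    rw [C.spine_of_pivot_eq_some hp, List.nodup_append]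
    refine ⟨ht, (C.nodup_internal hbd).sublist (List.takeWhile_sublist _), ?_⟩
    rintro x hx _ hx' rfl
    exact C.internal_not_mem_staff bd hbd x ((C.mem_cutInternal_iff hU hbd).1 hx').1
      ((C.mem_cutStaff_iff hU).1 hx).1

theorem adjIn_spine_iff (hU : IsTopologicalCut E U) (hy : y ∈ U) :
    AdjIn (C.spine U) x y ↔
      AdjIn (C.cutStaff U) x y ∨ ∃ bd, C.pivot U = some bd ∧ AdjIn (cutPath U bd) x y := by
  cases hp : C.pivot U with
  | none => simp [C.spine_of_pivot_eq_none hp]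
  | some bd =>
    have hyb : y ≠ bd.2.2 := fun h => C.end_not_mem_of_pivot hU hp (h ▸ hy)
    simp only [C.spine_of_pivot_eq_some hp, Option.some_inj, exists_eq_left']
    rw [adjIn_append_iff, cutPath, ← List.cons_append, adjIn_append_singleton_iff,
      adjIn_cons_iff, (C.pivot_spec hp).2.1]
    simp only [hyb, and_false, or_false, Option.some_inj]
    tauto

theorem getLast?_spine_eq_some_iff : (C.spine U).getLast? = some u ↔
    (C.pivot U = none ∧ (C.cutStaff U).getLast? = some u) ∨
      ∃ bd, C.pivot U = some bd ∧ (cutInternal U bd).getLast? = some u := by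
  cases hp : C.pivot U with
  | none => simp [C.spine_of_pivot_eq_none hp]
  | some bd =>
    obtain ⟨v, hv⟩ : ∃ v, (cutInternal U bd).getLast? = some v :=
      Option.ne_none_iff_exists'.1 (by simpa using (C.pivot_spec hp).2.2)
    simp [C.spine_of_pivot_eq_some hp, List.getLast?_append, hv]

theorem mem_cutBends_iff :
    bd ∈ C.cutBends U ↔
      bd ∈ C.bends ∧ cutInternal U bd ≠ [] ∧ C.pivot U ≠ some bd := by
  simp [cutBends]

theorem not_mem_spine_of_mem_cutBends (hU : IsTopologicalCut E U) (hbd : bd ∈ C.cutBends U)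
    (hx : x ∈ cutInternal U bd) : x ∉ C.spine U := by
  obtain ⟨hbd, -, hp⟩ := C.mem_cutBends_iff.1 hbd
  have hxL := ((C.mem_cutInternal_iff hU hbd).1 hx).1
  have hxs : x ∉ C.cutStaff U := fun h =>
    C.internal_not_mem_staff bd hbd x hxL ((C.mem_cutStaff_iff hU).1 h).1
  cases hq : C.pivot U with
  | none => rwa [C.spine_of_pivot_eq_none hq]
  | some bd₀ =>
    have hbd₀ := (C.pivot_spec hq).1
    rw [C.spine_of_pivot_eq_some hq, List.mem_append, not_or]
    refine ⟨hxs, fun h => hp ?_⟩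
    rw [hq, C.eq_of_mem_internal hbd₀ hbd ((C.mem_cutInternal_iff hU hbd₀).1 h).1 hxL]

theorem mem_spine_or_cutBends (hU : IsTopologicalCut E U) (hu : u ∈ U) :
    u ∈ C.spine U ∨ ∃ bd ∈ C.cutBends U, u ∈ cutInternal U bd := by
  rcases C.mem_staff_or_internal u with hs | ⟨bd, hbd, hL⟩
  · exact Or.inl (C.cutStaff_sublist_spine.subset ((C.mem_cutStaff_iff hU).2 ⟨hs, hu⟩))
  · have hP : u ∈ cutInternal U bd := (C.mem_cutInternal_iff hU hbd).2 ⟨hL, hu⟩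
    by_cases hp : C.pivot U = some bd
    · exact Or.inl (by rw [C.spine_of_pivot_eq_some hp]; exact List.mem_append_right _ hP)
    · exact Or.inr ⟨bd, C.mem_cutBends_iff.2 ⟨hbd, List.ne_nil_of_mem hP, hp⟩, hP⟩

theorem exists_cutBends_iff {Φ : V × List V × V → Prop} :
    (∃ bd ∈ C.bends, cutInternal U bd ≠ [] ∧ Φ bd) ↔
      (∃ bd, C.pivot U = some bd ∧ Φ bd) ∨ ∃ bd ∈ C.cutBends U, Φ bd := by
  simp only [cutBends, List.mem_filter, decide_eq_true_eq]
  constructor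
  · rintro ⟨bd, hbd, hP, hΦ⟩
    by_cases hp : C.pivot U = some bd
    · exact Or.inl ⟨bd, hp, hΦ⟩
    · exact Or.inr ⟨bd, ⟨hbd, hP, hp⟩, hΦ⟩
  · rintro (⟨bd, hp, hΦ⟩ | ⟨bd, ⟨hbd, hP, -⟩, hΦ⟩)
    · exact ⟨bd, (C.pivot_spec hp).1, (C.pivot_spec hp).2.2, hΦ⟩
    · exact ⟨bd, hbd, hP, hΦ⟩

theorem adj_iff_spine (hU : IsTopologicalCut E U) (hy : y ∈ U) :
    E x y ↔ AdjIn (C.spine U) x y ∨ ∃ bd ∈ C.cutBends U, AdjIn (cutPath U bd) x y := by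
  rw [C.adj_iff_cut hU hy, C.exists_cutBends_iff, C.adjIn_spine_iff hU hy, or_assoc]

theorem sink_iff (hU : IsTopologicalCut E U) (hu : u ∈ U) :
    (∀ z ∈ U, ¬ E u z) ↔ (C.pivot U = none ∧ (C.cutStaff U).getLast? = some u) ∨
      ∃ bd ∈ C.bends, cutInternal U bd ≠ [] ∧ bd.2.2 ∉ U ∧
        (cutInternal U bd).getLast? = some u := by
  have hinternal {bd} (hbd : bd ∈ C.bends) (h : (cutInternal U bd).getLast? = some u) :
      u ∈ bd.2.1 :=
    ((C.mem_cutInternal_iff hU hbd).1 (List.mem_of_getLast? h)).1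
  rcases C.mem_staff_or_internal u with hs | ⟨bd, hbd, hL⟩
  · have hno : ¬ ∃ bd ∈ C.bends, cutInternal U bd ≠ [] ∧ bd.2.2 ∉ U ∧
        (cutInternal U bd).getLast? = some u :=
      fun ⟨bd, hbd, _, _, h⟩ => C.internal_not_mem_staff bd hbd u (hinternal hbd h) hs
    rw [C.sink_iff_of_mem_staff hU hs hu, or_iff_left hno, C.pivot_eq_none_iff]
    constructor
    · rintro ⟨hlast, h⟩
      exact ⟨fun bd hbd ha => h bd hbd (Option.some_inj.1 (ha.symm.trans hlast)), hlast⟩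
    · rintro ⟨h, hlast⟩
      exact ⟨hlast, fun bd hbd ha => h bd hbd (ha ▸ hlast)⟩
  · have hno : ¬ (C.pivot U = none ∧ (C.cutStaff U).getLast? = some u) := fun ⟨_, h⟩ =>
      C.internal_not_mem_staff bd hbd u hL ((C.mem_cutStaff_iff hU).1 (List.mem_of_getLast? h)).1
    rw [C.sink_iff_of_mem_internal hU hbd hL hu, or_iff_right hno]
    constructor
    · rintro ⟨hb, hlast⟩
      exact ⟨bd, hbd, fun h => by simp [h] at hlast, hb, hlast⟩
    · rintro ⟨bd', hbd', -, hb, hlast⟩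
      obtain rfl := C.eq_of_mem_internal hbd' hbd (hinternal hbd' hlast) hL
      exact ⟨hb, hlast⟩

theorem sink_iff_spine (hU : IsTopologicalCut E U) (hu : u ∈ U) :
    (∀ z ∈ U, ¬ E u z) ↔ (C.spine U).getLast? = some u ∨
      ∃ bd ∈ C.cutBends U, bd.2.2 ∉ U ∧ (cutInternal U bd).getLast? = some u := by
  rw [C.sink_iff hU hu, C.exists_cutBends_iff, C.getLast?_spine_eq_some_iff, ← or_assoc]
  refine or_congr_left (or_congr_right (exists_congr fun bd => and_congr_right fun hp => ?_))
  exact and_iff_right (C.end_not_mem_of_pivot hU hp)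

theorem forall_mem_start_cons_cutInternal (hU : IsTopologicalCut E U) (hbd : bd ∈ C.cutBends U) :
    ∀ x ∈ bd.1 :: cutInternal U bd, x ∈ U := by
  obtain ⟨hbd, hP, -⟩ := C.mem_cutBends_iff.1 hbd
  rintro x (_ | ⟨_, hx⟩)
  exacts [C.start_mem_of_cutInternal_ne_nil hU hbd hP, ((C.mem_cutInternal_iff hU hbd).1 hx).2]

theorem nodup_restrict_staff (hU : IsTopologicalCut E U) :
    ((C.spine U).map (toSubtypeOption U) ++ [none]).Nodup := by
  have hspine := C.forall_mem_spine hU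
  rw [List.nodup_append]
  refine ⟨(C.nodup_spine hU).map_on fun x hx y hy h =>
    toSubtypeOption_injOn (hspine x hx) (hspine y hy) h, List.nodup_singleton _, ?_⟩
  simp only [List.mem_singleton]
  rintro a ha _ rfl rfl
  exact none_not_mem_map_toSubtypeOption hspine ha

theorem pair_sublist_restrict_staff (hU : IsTopologicalCut E U) (hbd : bd ∈ C.cutBends U) :
    [toSubtypeOption U bd.1, toSubtypeOption U bd.2.2].Sublist
      ((C.spine U).map (toSubtypeOption U) ++ [none]) := by
  have ha := C.forall_mem_start_cons_cutInternal hU hbd bd.1 (by simp)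
  have hbd := (C.mem_cutBends_iff.1 hbd).1
  by_cases hb : bd.2.2 ∈ U
  · refine List.Sublist.trans ?_ (List.sublist_append_left _ _)
    exact ((C.pair_sublist_cutStaff hU hbd ha hb).trans C.cutStaff_sublist_spine).map _
  · rw [toSubtypeOption_eq_none_iff.2 hb]
    refine List.Sublist.append (l₁ := [_]) (List.singleton_sublist.2 ?_) (List.Sublist.refl _)
    exact List.mem_map_of_mem (C.cutStaff_sublist_spine.subset
      ((C.mem_cutStaff_iff hU).2 ⟨C.start_mem_staff hbd, ha⟩))

theorem nodup_restrict_internals :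
    (((C.cutBends U).map (restrictBend U)).map (fun bd => bd.2.1)).flatten.Nodup := by
  have hsub : ((C.cutBends U).map (cutInternal U)).flatten.Sublist
      (C.bends.map (fun bd => bd.2.1)).flatten := by
    refine List.Sublist.trans (l₂ := ((C.cutBends U).map (fun bd => bd.2.1)).flatten) ?_
      (List.filter_sublist.map _).flatten
    simp only [← List.flatMap_def]
    exact List.Sublist.flatMap_right _ fun bd _ => List.takeWhile_sublist _
  have hU' : ∀ x ∈ ((C.cutBends U).map (cutInternal U)).flatten, x ∈ U := by
    simp only [List.mem_flatten, List.mem_map]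
    rintro x ⟨_, ⟨bd, -, rfl⟩, hx⟩
    simpa using List.mem_takeWhile_imp hx
  have hmap : ((C.cutBends U).map (restrictBend U)).map (fun bd => bd.2.1) =
      ((C.cutBends U).map (cutInternal U)).map (List.map (toSubtypeOption U)) := by
    simp [restrictBend]
  rw [hmap, ← List.map_flatten]
  exact (hsub.nodup C.nodup_internals).map_on fun x hx y hy h =>
    toSubtypeOption_injOn (hU' x hx) (hU' y hy) h

theorem restrict_internal_not_mem_staff (hU : IsTopologicalCut E U) (hbd : bd ∈ C.cutBends U) :
    ∀ o ∈ (restrictBend U bd).2.1, o ∉ (C.spine U).map (toSubtypeOption U) ++ [none] := by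
  simp only [restrictBend, List.mem_map, List.mem_append, List.mem_singleton]
  rintro _ ⟨x, hx, rfl⟩ (⟨y, hy, hxy⟩ | h)
  · have hxU := C.forall_mem_start_cons_cutInternal hU hbd x (List.mem_cons_of_mem _ hx)
    obtain rfl := toSubtypeOption_injOn (C.forall_mem_spine hU y hy) hxU hxy
    exact C.not_mem_spine_of_mem_cutBends hU hbd hx hy
  · exact toSubtypeOption_eq_none_iff.1 h
      (C.forall_mem_start_cons_cutInternal hU hbd x (List.mem_cons_of_mem _ hx))

theorem mem_restrict_staff_or_internal (hU : IsTopologicalCut E U) (o : Option {v // v ∈ U}) :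
    o ∈ (C.spine U).map (toSubtypeOption U) ++ [none] ∨
      ∃ bd ∈ (C.cutBends U).map (restrictBend U), o ∈ bd.2.1 := by
  rcases o with _ | ⟨u, hu⟩
  · simp
  · have hf : toSubtypeOption U u = some ⟨u, hu⟩ := toSubtypeOption_eq_some_iff.2 rfl
    rcases C.mem_spine_or_cutBends hU hu with h | ⟨bd, hbd, h⟩
    · exact Or.inl (List.mem_append_left _ (hf ▸ List.mem_map_of_mem h))
    · exact Or.inr ⟨restrictBend U bd, List.mem_map_of_mem hbd, hf ▸ List.mem_map_of_mem h⟩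

theorem restrictAddSink_iff (hU : IsTopologicalCut E U) (x y : Option {v // v ∈ U}) :
    restrictAddSink E U x y ↔ AdjIn ((C.spine U).map (toSubtypeOption U) ++ [none]) x y ∨
      ∃ bd ∈ (C.cutBends U).map (restrictBend U), AdjIn (bendPath bd) x y := by
  have hspine := C.forall_mem_spine hU
  have hpath {bd} (hbd : bd ∈ C.cutBends U) : (cutPath U bd).map (toSubtypeOption U) =
      (bd.1 :: cutInternal U bd).map (toSubtypeOption U) ++ [toSubtypeOption U bd.2.2] := by
    simp [cutPath]
  simp only [List.mem_map, exists_exists_and_eq_and, bendPath_restrictBend]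
  rcases x with _ | u
  · refine iff_of_false (fun h => h) ?_
    rintro (h | ⟨bd, hbd, h⟩)
    · exact not_adjIn_map_toSubtypeOption_append_none hspine h
    · rw [hpath hbd] at h
      exact not_adjIn_map_toSubtypeOption_append_none
        (C.forall_mem_start_cons_cutInternal hU hbd) h
  rcases y with _ | v
  · show (∀ z : {v // v ∈ U}, ¬E u z) ↔ _
    rw [Subtype.forall, C.sink_iff_spine hU u.2,
      adjIn_map_toSubtypeOption_append_none_iff hspine, and_iff_left rfl]
    refine or_congr_right (exists_congr fun bd => and_congr_right fun hbd => ?_)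
    rw [hpath hbd, adjIn_map_toSubtypeOption_append_none_iff
      (C.forall_mem_start_cons_cutInternal hU hbd), toSubtypeOption_eq_none_iff]
    obtain ⟨p, hp⟩ : ∃ p, (cutInternal U bd).getLast? = some p :=
      Option.ne_none_iff_exists'.1 (by simpa using (C.mem_cutBends_iff.1 hbd).2.1)
    simp [List.getLast?_cons, hp, and_comm]
  · show E u v ↔ _
    rw [C.adj_iff_spine hU v.2, adjIn_append_singleton_iff, adjIn_map_toSubtypeOption]
    simp [adjIn_map_toSubtypeOption]

def restrict (hU : IsTopologicalCut E U) : Caduceus (restrictAddSink E U) where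
  staff := (C.spine U).map (toSubtypeOption U) ++ [none]
  bends := (C.cutBends U).map (restrictBend U)
  staff_ne_nil := by simp
  nodup_staff := C.nodup_restrict_staff hU
  internal_ne_nil := List.forall_mem_map.2 fun bd hbd => by
    simpa [restrictBend] using (C.mem_cutBends_iff.1 hbd).2.1
  pair_sublist_staff := List.forall_mem_map.2 fun _ hbd => C.pair_sublist_restrict_staff hU hbd
  nodup_internals := C.nodup_restrict_internals
  internal_not_mem_staff := List.forall_mem_map.2 fun _ hbd =>
    C.restrict_internal_not_mem_staff hU hbd
  mem_staff_or_internal := C.mem_restrict_staff_or_internal hU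
  adj_iff := C.restrictAddSink_iff hU

end Caduceus

/-- Caduceus graphs are left-hereditary: for a caduceus graph `G` and a
topological cut `U`, adding a fresh sink (reached from every node of `G[U]`
with no out-neighbor inside `U`) to the induced subgraph `G[U]` yields a
caduceus graph again. -/
theorem caduceus_left_hereditary {V : Type*} (E : V → V → Prop)
    (hG : IsCaduceus E)
    (U : Set V) (hU : ∀ u v, E u v → v ∈ U → u ∈ U) :
    IsCaduceus (fun x y : Option {v // v ∈ U} =>
      match x, y with
      | some u, some v => E u.1 v.1
      | some u, none => ∀ z : {v // v ∈ U}, ¬ E u.1 z.1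
      | none, _ => False) := by
  classical
  obtain ⟨C⟩ := hG.nonempty_caduceus
  -- `restrictAddSink E U` and the `match` above agree only after case analysis
  convert (C.restrict hU).isCaduceus using 1
  funext x y
  cases x <;> cases y <;> rfl
end
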